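/- Let φ : (0,∞) → ℝ be continuous, and assume that its upper right Dini derivative φ'_+(x) := limsup_{h→0+} (φ(x+h) − φ(x))/h is finite at every x ∈ (0,∞), Lebesgue measurable, and bounded on every compact subinterval [s,t] ⊂ (0,∞). If there exists a continuous function h : (0,∞) → ℝ such that φ'_+(x) = h(x) for Lebesgue-almost every x ∈ (0,∞), then φ is continuously differentiable on (0,∞) and φ'(x) = h(x) for every x ∈ (0,∞). -/

import Mathlib

/-!
A bound `|D⁺φ| ≤ C` on the Dini derivative over an interval makes `φ` `C`-Lipschitz there
(compare `φ` with the lines of slope `±C`), hence absolutely continuous: `φ` is differentiable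
a.e. and is the integral of its derivative. Where `φ` is differentiable, `D⁺φ = φ'`, so `φ' = h`
a.e. and `φ y = φ a + ∫ t in a..y, h t`; as `h` is continuous, this integral has derivative `h`
everywhere.
-/

open MeasureTheory Filter Set Topology

/-- Upper right Dini derivative, as a value in `EReal = [-∞,∞]`. -/
noncomputable def diniE (f : ℝ → ℝ) (x : ℝ) : EReal :=
  Filter.limsup (fun h : ℝ => (((f (x + h) - f x) / h : ℝ) : EReal))
    (nhdsWithin 0 (Set.Ioi 0))

lemma diniE_eq_limsup_slope (f : ℝ → ℝ) (x : ℝ) :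
    diniE f x = limsup (fun z => (slope f x z : EReal)) (𝓝[>] x) := by
  rw [← add_zero x, ← Filter.map_add_left_nhdsGT, add_zero, ← limsup_comp]
  simp only [diniE, Function.comp_def, slope_def_field, add_sub_cancel_left]

lemma diniE_eq_of_hasDerivAt {f : ℝ → ℝ} {x d : ℝ} (hf : HasDerivAt f d x) :
    diniE f x = d := by
  rw [diniE_eq_limsup_slope]
  exact (EReal.tendsto_coe.2 ((hasDerivWithinAt_iff_tendsto_slope' self_notMem_Ioi).1
    hf.hasDerivWithinAt)).limsup_eq

lemma frequently_slope_lt_of_diniE_lt {f : ℝ → ℝ} {x r : ℝ} (h : diniE f x < r) :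
    ∃ᶠ z in 𝓝[>] x, slope f x z < r := by
  rw [diniE_eq_limsup_slope] at h
  exact (eventually_lt_of_limsup_lt h).frequently.mono fun z hz => EReal.coe_lt_coe_iff.1 hz

lemma frequently_lt_slope_of_lt_diniE {f : ℝ → ℝ} {x r : ℝ} (h : (r : EReal) < diniE f x) :
    ∃ᶠ z in 𝓝[>] x, r < slope f x z := by
  rw [diniE_eq_limsup_slope] at h
  exact (frequently_lt_of_lt_limsup (by isBoundedDefault) h).mono fun z hz =>
    EReal.coe_lt_coe_iff.1 hz

section

variable {f : ℝ → ℝ} {a b C : ℝ}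

lemma sub_le_mul_sub_of_diniE_le (hf : ContinuousOn f (Icc a b))
    (hC : ∀ x ∈ Ico a b, diniE f x ≤ C) (hab : a ≤ b) : f b - f a ≤ C * (b - a) := by
  have := image_le_of_liminf_slope_right_le_deriv_boundary hf
    (B := fun y => f a + C * (y - a)) (B' := fun _ => C) (by simp) (by fun_prop)
    (fun x _ => ((hasDerivWithinAt_id x _).sub_const a).const_mul C |>.const_add (f a)
      |>.congr_deriv (mul_one C))
    (fun x hx r hr =>
      frequently_slope_lt_of_diniE_lt ((hC x hx).trans_lt (EReal.coe_lt_coe_iff.2 hr)))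
    (right_mem_Icc.2 hab)
  linarith

lemma mul_sub_le_sub_of_le_diniE (hf : ContinuousOn f (Icc a b))
    (hC : ∀ x ∈ Ico a b, (C : EReal) ≤ diniE f x) (hab : a ≤ b) : C * (b - a) ≤ f b - f a := by
  have := image_le_of_liminf_slope_right_le_deriv_boundary hf.neg
    (B := fun y => -f a - C * (y - a)) (B' := fun _ => -C) (by simp) (by fun_prop)
    (fun x _ => ((hasDerivWithinAt_id x _).sub_const a).const_mul C |>.const_sub (-f a)
      |>.congr_deriv (by ring))
    (fun x hx r hr => (frequently_lt_slope_of_lt_diniE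
      ((EReal.coe_lt_coe_iff.2 (neg_lt.1 hr)).trans_le (hC x hx))).mono fun z hz => by
        show slope (fun t => -f t) x z < r
        rw [slope_neg]; linarith)
    (right_mem_Icc.2 hab)
  linarith [Pi.neg_apply f b]

lemma lipschitzOnWith_of_neg_le_diniE_le (hf : ContinuousOn f (Icc a b))
    (hC : ∀ x ∈ Ico a b, -(C : EReal) ≤ diniE f x ∧ diniE f x ≤ C) :
    LipschitzOnWith C.toNNReal f (Icc a b) := by
  refine LipschitzOnWith.of_le_add_mul' C fun x hx y hy => ?_
  have hsub : ∀ {u v}, u ∈ Icc a b → v ∈ Icc a b → Icc u v ⊆ Icc a b ∧ Ico u v ⊆ Ico a b :=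
    fun hu hv => ⟨Icc_subset_Icc hu.1 hv.2, Ico_subset_Ico hu.1 hv.2⟩
  rcases le_total x y with hxy | hyx
  · have := mul_sub_le_sub_of_le_diniE (C := -C) (hf.mono (hsub hx hy).1)
      (fun z hz => by exact_mod_cast (hC z ((hsub hx hy).2 hz)).1) hxy
    rw [Real.dist_eq, abs_of_nonpos (by linarith)]
    linarith
  · have := sub_le_mul_sub_of_diniE_le (hf.mono (hsub hy hx).1)
      (fun z hz => (hC z ((hsub hy hx).2 hz)).2) hyx
    rw [Real.dist_eq, abs_of_nonneg (by linarith)]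
    linarith

theorem integral_eq_sub_of_diniE_ae_eq {g : ℝ → ℝ} (hab : a ≤ b) (hf : ContinuousOn f (Icc a b))
    (hC : ∀ x ∈ Ico a b, -(C : EReal) ≤ diniE f x ∧ diniE f x ≤ C)
    (hg : ∀ᵐ x, x ∈ Icc a b → diniE f x = g x) :
    ∫ x in a..b, g x = f b - f a := by
  have hac : AbsolutelyContinuousOnInterval f a b := by
    apply LipschitzOnWith.absolutelyContinuousOnInterval
    rw [uIcc_of_le hab]
    exact lipschitzOnWith_of_neg_le_diniE_le hf hC
  rw [← hac.integral_deriv_eq_sub]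
  refine intervalIntegral.integral_congr_ae ?_
  filter_upwards [hac.ae_differentiableAt, hg] with x hdiff hgx hx
  have hx' : x ∈ Icc a b := by
    rw [uIoc_of_le hab] at hx; exact Ioc_subset_Icc_self hx
  rw [uIcc_of_le hab] at hdiff
  exact_mod_cast (hgx hx').symm.trans (diniE_eq_of_hasDerivAt (hdiff hx').hasDerivAt)

end

theorem stmt_12_general (φ h : ℝ → ℝ)
    (hcont : ContinuousOn φ (Set.Ioi 0))
    (hbdd : ∀ s t : ℝ, 0 < s → s < t → ∃ C : ℝ, ∀ x ∈ Set.Icc s t,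
      -(C : EReal) ≤ diniE φ x ∧ diniE φ x ≤ (C : EReal))
    (hh : ContinuousOn h (Set.Ioi 0))
    (hae : ∀ᵐ x ∂(MeasureTheory.volume.restrict (Set.Ioi (0 : ℝ))),
      diniE φ x = (h x : EReal)) :
    ∀ x ∈ Set.Ioi (0 : ℝ), HasDerivAt φ (h x) x := by
  intro x hx
  have ha : 0 < x / 2 := half_pos hx
  have hae' : ∀ᵐ y, y ∈ Ioi 0 → diniE φ y = h y := (ae_restrict_iff' measurableSet_Ioi).1 hae
  have hφ : ∀ y ∈ Ioi (x / 2), φ y = φ (x / 2) + ∫ t in x / 2..y, h t := fun y hy => by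
    obtain ⟨C, hC⟩ := hbdd _ _ ha hy
    rw [integral_eq_sub_of_diniE_ae_eq hy.le (hcont.mono fun z hz => ha.trans_le hz.1)
      (fun z hz => hC z (Ico_subset_Icc_self hz))
      (hae'.mono fun z hz hzI => hz (ha.trans_le hzI.1))]
    ring
  have hF : HasDerivAt (fun y => ∫ t in x / 2..y, h t) (h x) x :=
    intervalIntegral.integral_hasDerivAt_right
      ((hh.mono fun z hz => (lt_min ha hx).trans_le hz.1).intervalIntegrable)
      (hh.stronglyMeasurableAtFilter isOpen_Ioi x hx)
      (hh.continuousAt (isOpen_Ioi.mem_nhds hx))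
  exact (hF.const_add _).congr_of_eventuallyEq
    (eventually_of_mem (isOpen_Ioi.mem_nhds (half_lt_self hx)) hφ)

/-- If a continuous function on `(0,∞)` has a finite, measurable, locally bounded upper
right Dini derivative which agrees Lebesgue-a.e. with a continuous function `h`, then it
is continuously differentiable on `(0,∞)` with derivative `h`. -/
theorem stmt_12 (φ h : ℝ → ℝ)
    (hcont : ContinuousOn φ (Set.Ioi 0))
    (hfin : ∀ x ∈ Set.Ioi (0 : ℝ), diniE φ x ≠ ⊥ ∧ diniE φ x ≠ ⊤)
    (hmeas : Measurable fun x => diniE φ x)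
    (hbdd : ∀ s t : ℝ, 0 < s → s < t → ∃ C : ℝ, ∀ x ∈ Set.Icc s t,
      -(C : EReal) ≤ diniE φ x ∧ diniE φ x ≤ (C : EReal))
    (hh : ContinuousOn h (Set.Ioi 0))
    (hae : ∀ᵐ x ∂(MeasureTheory.volume.restrict (Set.Ioi (0 : ℝ))),
      diniE φ x = (h x : EReal)) :
    ∀ x ∈ Set.Ioi (0 : ℝ), HasDerivAt φ (h x) x :=
  stmt_12_general φ h hcont hbdd hh hae
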